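/- For n ≥ 1, Σ_{F∈F(n)} Π_{v∈V(F)} (2 − 1/h_v) = (2n+1)^{n−1}/n!. -/

import Mathlib

open Polynomial

inductive PlaneTree : Type where
  | node : List PlaneTree → PlaneTree

namespace PlaneTree

/-- total number of vertices -/
def numVertices : PlaneTree → ℕ
  | node ts => 1 + (ts.attach.map (fun t => numVertices t.1)).sum
decreasing_by simp only [PlaneTree.node.sizeOf_spec]; exact Nat.lt_add_left 1 (List.sizeOf_lt_of_mem t.2)

/-- number of internal vertices (vertices with at least one child) -/
def numInternal : PlaneTree → ℕ
  | node ts => (if ts.isEmpty then 0 else 1) + (ts.attach.map (fun t => numInternal t.1)).sum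
decreasing_by simp only [PlaneTree.node.sizeOf_spec]; exact Nat.lt_add_left 1 (List.sizeOf_lt_of_mem t.2)

/-- product of `g h_v` over all internal vertices `v`, where `h_v` is the number of
internal vertices of the subtree rooted at `v` -/
def internalHookProd {α : Type} [CommMonoid α] (g : ℕ → α) : PlaneTree → α
  | node ts =>
    (if ts.isEmpty then 1 else g (numInternal (node ts))) *
      (ts.attach.map (fun t => internalHookProd g t.1)).prod
decreasing_by simp only [PlaneTree.node.sizeOf_spec]; exact Nat.lt_add_left 1 (List.sizeOf_lt_of_mem t.2)

/-- product of `g h_v` over all vertices `v`, where `h_v` is the number of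
vertices of the subtree rooted at `v` -/
def vertexHookProd {α : Type} [CommMonoid α] (g : ℕ → α) : PlaneTree → α
  | node ts =>
    g (numVertices (node ts)) * (ts.attach.map (fun t => vertexHookProd g t.1)).prod
decreasing_by simp only [PlaneTree.node.sizeOf_spec]; exact Nat.lt_add_left 1 (List.sizeOf_lt_of_mem t.2)

/-- every internal vertex has exactly `a` children -/
def IsFullAry (a : ℕ) : PlaneTree → Prop
  | node ts => (ts.length = 0 ∨ ts.length = a) ∧ ∀ t ∈ ts, IsFullAry a t

/-- `IsKMAry k m b T`: with the root of `T` viewed as being on a level of parity `b`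
(`b = false` meaning even), every vertex on an even level has `k` children and
every vertex on an odd level has `m` or `0` children. -/
def IsKMAry (k m : ℕ) : Bool → PlaneTree → Prop
  | b, node ts =>
    (if b then ts.length = m ∨ ts.length = 0 else ts.length = k) ∧
      ∀ t ∈ ts, IsKMAry k m (!b) t

/-- number of vertices on levels of parity `b`, the root having parity `cur` -/
def parityVertices (b cur : Bool) : PlaneTree → ℕ
  | node ts =>
    (if cur = b then 1 else 0) + (ts.attach.map (fun t => parityVertices b (!cur) t.1)).sum
termination_by T => sizeOf T
decreasing_by simp only [PlaneTree.node.sizeOf_spec]; exact Nat.lt_add_left 1 (List.sizeOf_lt_of_mem t.2)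

/-- number of internal vertices on levels of parity `b`, the root having parity `cur` -/
def parityInternal (b cur : Bool) : PlaneTree → ℕ
  | node ts =>
    (if cur = b ∧ ¬ts.isEmpty then 1 else 0) +
      (ts.attach.map (fun t => parityInternal b (!cur) t.1)).sum
termination_by T => sizeOf T
decreasing_by simp only [PlaneTree.node.sizeOf_spec]; exact Nat.lt_add_left 1 (List.sizeOf_lt_of_mem t.2)

/-- the order of a `(k,m)`-ary tree: the number of internal (crucial) vertices on odd levels -/
def kmOrder (T : PlaneTree) : ℕ := parityInternal true false T

end PlaneTree

/-!
Removing the first tree `node ts` of a forest leaves a forest, so the sums `s n` over forests with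
`n` vertices satisfy `s (n + 1) = ∑_{i + j = n} (2 - 1/(i + 1)) s i s j`. The Abel polynomials
`A_n(x) = x (x + 2n)^(n-1)` form a sequence of binomial type,
`∑_{i + j = n} C(n, i) A_i(x) A_j(y) = A_n(x + y)`. Since `A_n(0) = 0` for `n > 0` and
`(2 - 1/(k + 1)) A_k(1) / k! = -A_{k+1}(-1) / (k + 1)!`, the case `x = -1`, `y = 1` says that
`A_n(1) / n! = (2n + 1)^(n-1) / n!` satisfies the same recurrence.
-/

open Finset

namespace Polynomial

variable {R : Type*} [CommRing R]

noncomputable def abelPoly (a : R) : ℕ → R[X]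
  | 0 => 1
  | n + 1 => X * (X + C (a * (n + 1))) ^ n

@[simp] theorem abelPoly_zero (a : R) : abelPoly a 0 = 1 := rfl

theorem eval_abelPoly_succ (a x : R) (n : ℕ) :
    (abelPoly a (n + 1)).eval x = x * (x + a * (n + 1)) ^ n := by
  simp [abelPoly]

theorem derivative_abelPoly_succ (a : R) (n : ℕ) :
    derivative (abelPoly a (n + 1)) = (n + 1 : R[X]) * (abelPoly a n).comp (X + C a) := by
  cases n with
  | zero => simp [abelPoly]
  | succ n =>
    simp only [abelPoly, derivative_mul, derivative_X, derivative_pow, derivative_add,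
      derivative_C, mul_comp, X_comp, pow_comp, add_comp, C_comp, Nat.add_sub_cancel]
    simp only [map_add, map_mul, map_natCast, map_one, Nat.cast_add, Nat.cast_one]
    ring

theorem eval_zero_abelPoly_succ (a : R) (n : ℕ) : (abelPoly a (n + 1)).eval 0 = 0 := by
  simp [eval_abelPoly_succ]

theorem eval_one_abelPoly_two (n : ℕ) :
    (abelPoly (2 : R) n).eval 1 = ((2 * n + 1 : ℕ) : R) ^ (n - 1) := by
  cases n with
  | zero => simp
  | succ n => rw [eval_abelPoly_succ]; push_cast; ring

theorem eq_of_derivative_eq_of_eval_zero_eq [IsAddTorsionFree R] {p q : R[X]}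
    (hd : derivative p = derivative q) (h0 : p.eval 0 = q.eval 0) : p = q := by
  have hc := eq_C_of_derivative_eq_zero (p := p - q) (by rw [derivative_sub, hd, sub_self])
  rwa [coeff_zero_eq_eval_zero, eval_sub, h0, sub_self, map_zero, sub_eq_zero] at hc

theorem sum_antidiagonal_choose_mul_abelPoly [IsAddTorsionFree R] (a y : R) (n : ℕ) :
    ∑ p ∈ antidiagonal n, (n.choose p.1 : R[X]) * abelPoly a p.1 * C ((abelPoly a p.2).eval y)
      = (abelPoly a n).comp (X + C y) := by
  induction n with
  | zero => simp
  | succ n ih =>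
    -- both sides have derivative `(n + 1) * (abelPoly a n).comp (X + C (a + y))`, and at `0` only
    -- the term `abelPoly a 0 = 1` survives on the left
    rw [Nat.sum_antidiagonal_succ]
    apply eq_of_derivative_eq_of_eval_zero_eq
    · have hcomm : (X + C y).comp (X + C a) = (X + C a).comp (X + C y) := by
        simp only [add_comp, X_comp, C_comp]; ring
      have hterm : ∀ p ∈ antidiagonal n, derivative (((n + 1).choose (p.1 + 1) : R[X]) *
            abelPoly a (p.1 + 1) * C ((abelPoly a p.2).eval y))
          = (n + 1 : R[X]) * ((n.choose p.1 : R[X]) * abelPoly a p.1 *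
            C ((abelPoly a p.2).eval y)).comp (X + C a) := by
        intro p _
        simp only [derivative_mul, derivative_natCast, derivative_C, derivative_abelPoly_succ,
          mul_comp, natCast_comp, C_comp]
        have hchoose := congrArg (Nat.cast (R := R[X])) (Nat.add_one_mul_choose_eq n p.1)
        push_cast at hchoose
        linear_combination -(abelPoly a p.1).comp (X + C a) * C ((abelPoly a p.2).eval y) * hchoose
      rw [derivative_add, derivative_sum, sum_congr rfl hterm, ← mul_sum, ← sum_comp, ih,
        comp_assoc, hcomm, ← comp_assoc, derivative_comp, derivative_abelPoly_succ]
      simp [mul_comp]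
    · simp [eval_finsetSum, eval_zero_abelPoly_succ]

theorem sum_antidiagonal_choose_mul_eval_abelPoly [IsAddTorsionFree R] (a x y : R) (n : ℕ) :
    ∑ p ∈ antidiagonal n, (n.choose p.1 : R) * (abelPoly a p.1).eval x * (abelPoly a p.2).eval y
      = (abelPoly a n).eval (x + y) := by
  simpa [eval_finsetSum, eval_comp] using
    congrArg (eval x) (sum_antidiagonal_choose_mul_abelPoly a y n)

theorem sum_antidiagonal_eval_abelPoly_div_factorial {K : Type*} [Field K] [CharZero K]
    (a x y : K) (n : ℕ) :
    ∑ p ∈ antidiagonal n, (abelPoly a p.1).eval x / p.1.factorial *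
        ((abelPoly a p.2).eval y / p.2.factorial)
      = (abelPoly a n).eval (x + y) / n.factorial := by
  rw [← sum_antidiagonal_choose_mul_eval_abelPoly, sum_div]
  refine sum_congr rfl fun ⟨i, j⟩ hij => ?_
  obtain rfl := HasAntidiagonal.mem_antidiagonal.1 hij
  have hfac : ((i + j).factorial : K) ≠ 0 := Nat.cast_ne_zero.2 (Nat.factorial_ne_zero _)
  rw [Nat.cast_add_choose]
  field_simp

end Polynomial

theorem two_sub_inv_mul_eval_abelPoly {K : Type*} [Field K] [CharZero K] (k : ℕ) :
    (2 - 1 / ((k + 1 : ℕ) : K)) * ((abelPoly 2 k).eval 1 / k.factorial)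
      = -((abelPoly 2 (k + 1)).eval (-1) / (k + 1).factorial) := by
  cases k with
  | zero => norm_num [eval_abelPoly_succ]
  | succ k =>
    have hk : (k : K) + 1 + 1 ≠ 0 := by exact_mod_cast (k + 1).succ_ne_zero
    have hfac : ((k + 1).factorial : K) ≠ 0 := Nat.cast_ne_zero.2 (Nat.factorial_ne_zero _)
    rw [eval_abelPoly_succ, eval_abelPoly_succ, Nat.factorial_succ (k + 1)]
    push_cast
    field_simp
    ring

theorem eval_abelPoly_two_recurrence {K : Type*} [Field K] [CharZero K] (n : ℕ) :
    (abelPoly 2 (n + 1)).eval 1 / (n + 1).factorial =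
      ∑ p ∈ antidiagonal n, (2 - 1 / ((p.1 + 1 : ℕ) : K)) *
        ((abelPoly 2 p.1).eval 1 / p.1.factorial) * ((abelPoly 2 p.2).eval 1 / p.2.factorial) := by
  have h := sum_antidiagonal_eval_abelPoly_div_factorial (2 : K) (-1) 1 (n + 1)
  rw [neg_add_cancel, eval_zero_abelPoly_succ, zero_div, Nat.sum_antidiagonal_succ] at h
  simp only [two_sub_inv_mul_eval_abelPoly, neg_mul, sum_neg_distrib]
  simpa [add_eq_zero_iff_eq_neg] using h

namespace PlaneTree

def forestSize (F : List PlaneTree) : ℕ := (F.map numVertices).sum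

def forestHookProd {α : Type} [CommMonoid α] (g : ℕ → α) (F : List PlaneTree) : α :=
  (F.map (vertexHookProd g)).prod

theorem numVertices_node (ts : List PlaneTree) : numVertices (node ts) = forestSize ts + 1 := by
  rw [numVertices, List.attach_map_val, forestSize, Nat.add_comm]

theorem vertexHookProd_node {α : Type} [CommMonoid α] (g : ℕ → α) (ts : List PlaneTree) :
    vertexHookProd g (node ts) = g (forestSize ts + 1) * forestHookProd g ts := by
  rw [vertexHookProd, List.attach_map_val, numVertices_node, forestHookProd]

theorem numVertices_pos (T : PlaneTree) : 0 < T.numVertices := by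
  cases T with | node ts => rw [numVertices_node]; omega

@[simp] theorem forestSize_nil : forestSize [] = 0 := rfl

@[simp] theorem forestSize_cons (T : PlaneTree) (F : List PlaneTree) :
    forestSize (T :: F) = T.numVertices + forestSize F := List.sum_cons

theorem forestHookProd_node_cons {α : Type} [CommMonoid α] (g : ℕ → α)
    (ts F : List PlaneTree) :
    forestHookProd g (node ts :: F) =
      g (forestSize ts + 1) * forestHookProd g ts * forestHookProd g F := by
  simp only [forestHookProd, List.map_cons, List.prod_cons, vertexHookProd_node, mul_assoc]

open scoped Classical in
noncomputable def forests : ℕ → Finset (List PlaneTree)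
  | 0 => {[]}
  | n + 1 => (antidiagonal n).attach.biUnion fun p =>
      (forests p.1.1 ×ˢ forests p.1.2).image fun q => node q.1 :: q.2
decreasing_by all_goals have := HasAntidiagonal.mem_antidiagonal.1 p.2; omega

theorem mem_forests {n : ℕ} {F : List PlaneTree} : F ∈ forests n ↔ forestSize F = n := by
  induction n using Nat.strong_induction_on generalizing F with
  | _ n ih =>
  match n, F with
  | 0, [] => simp [forests]
  | 0, T :: F => simp [forests, (numVertices_pos T).ne']
  | n + 1, [] => simp [forests]
  | n + 1, node ts :: F =>
    simp only [forests, mem_biUnion, mem_attach, mem_image, mem_product, true_and, Subtype.exists,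
      HasAntidiagonal.mem_antidiagonal, Prod.exists, List.cons.injEq, node.injEq, forestSize_cons,
      numVertices_node]
    constructor
    · rintro ⟨i, j, hij, _, _, ⟨hi, hj⟩, rfl, rfl⟩
      rw [ih i (by omega)] at hi
      rw [ih j (by omega)] at hj
      omega
    · intro h
      exact ⟨_, _, (by omega : forestSize ts + forestSize F = n), ts, F,
        ⟨(ih _ (by omega)).2 rfl, (ih _ (by omega)).2 rfl⟩, rfl, rfl⟩

noncomputable def forestHookSum {α : Type} [CommSemiring α] (g : ℕ → α) (n : ℕ) : α :=
  ∑ F ∈ forests n, forestHookProd g F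

theorem forestHookSum_zero {α : Type} [CommSemiring α] (g : ℕ → α) :
    forestHookSum g 0 = 1 := by
  simp [forestHookSum, forests, forestHookProd]

theorem forestHookSum_succ {α : Type} [CommSemiring α] (g : ℕ → α) (n : ℕ) :
    forestHookSum g (n + 1) =
      ∑ p ∈ antidiagonal n, g (p.1 + 1) * forestHookSum g p.1 * forestHookSum g p.2 := by
  classical
  have hdisj : ((antidiagonal n).attach : Set (antidiagonal n)).PairwiseDisjoint fun p =>
      (forests p.1.1 ×ˢ forests p.1.2).image fun q => node q.1 :: q.2 := by
    intro p _ p' _ hne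
    simp only [Function.onFun, disjoint_left, mem_image, mem_product, not_exists, not_and]
    rintro _ ⟨⟨ts, F⟩, ⟨hts, hF⟩, rfl⟩ ⟨ts', F'⟩ ⟨hts', hF'⟩ heq
    simp only [List.cons.injEq, node.injEq] at heq
    obtain ⟨rfl, rfl⟩ := heq
    rw [mem_forests] at hts hF hts' hF'
    exact hne (Subtype.ext (Prod.ext (hts.symm.trans hts') (hF.symm.trans hF')))
  rw [forestHookSum, forests, sum_biUnion hdisj, ← sum_attach (antidiagonal n)]
  refine sum_congr rfl fun p _ => ?_
  rw [sum_image fun q _ q' _ h => by simpa [Prod.ext_iff] using h, sum_product, forestHookSum,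
    forestHookSum, mul_sum (forests p.1.1), sum_mul_sum]
  refine sum_congr rfl fun ts hts => sum_congr rfl fun F _ => ?_
  rw [forestHookProd_node_cons, mem_forests.1 hts]

theorem finsum_forestHookProd {α : Type} [CommSemiring α] (g : ℕ → α) (n : ℕ) :
    ∑ᶠ F : {F : List PlaneTree // forestSize F = n}, forestHookProd g F.1 =
      forestHookSum g n := by
  have hset : {F | forestSize F = n} = ↑(forests n) := Set.ext fun _ => mem_forests.symm
  calc ∑ᶠ F : {F // forestSize F = n}, forestHookProd g F.1
      = ∑ᶠ F ∈ {F | forestSize F = n}, forestHookProd g F := finsum_set_coe_eq_finsum_mem _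
    _ = forestHookSum g n := by rw [hset, finsum_mem_coe_finset, forestHookSum]

theorem forestHookSum_two_sub_inv {K : Type} [Field K] [CharZero K] (n : ℕ) :
    forestHookSum (fun h => 2 - 1 / (h : K)) n = (abelPoly 2 n).eval 1 / n.factorial := by
  induction n using Nat.strong_induction_on with
  | _ n ih =>
  cases n with
  | zero => simp [forestHookSum_zero]
  | succ n =>
    rw [forestHookSum_succ, eval_abelPoly_two_recurrence]
    refine sum_congr rfl fun p hp => ?_
    have hp := HasAntidiagonal.mem_antidiagonal.1 hp
    rw [ih p.1 (by omega), ih p.2 (by omega)]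

end PlaneTree

theorem hook_two_sub_reciprocal_sum_forests_general (n : ℕ) :
    (∑ᶠ F : {F : List PlaneTree // (F.map PlaneTree.numVertices).sum = n},
        (F.1.map (PlaneTree.vertexHookProd (fun h => 2 - 1 / (h : ℚ)))).prod)
      = ((2 * n + 1 : ℕ) : ℚ) ^ (n - 1) / n.factorial := by
  rw [← eval_one_abelPoly_two, ← PlaneTree.forestHookSum_two_sub_inv]
  exact PlaneTree.finsum_forestHookProd _ n

/-- `Σ_{F∈F(n)} Π_{v∈V(F)} (2 - 1/h_v) = (2n+1)ⁿ⁻¹/n!`, summed over plane forests with `n`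
vertices. -/
theorem hook_two_sub_reciprocal_sum_forests (n : ℕ) (hn : 1 ≤ n) :
    (∑ᶠ F : {F : List PlaneTree // (F.map PlaneTree.numVertices).sum = n},
        (F.1.map (PlaneTree.vertexHookProd (fun h => 2 - 1 / (h : ℚ)))).prod)
      = ((2 * n + 1 : ℕ) : ℚ) ^ (n - 1) / n.factorial :=
  hook_two_sub_reciprocal_sum_forests_general n
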